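/- For p ∈ R^3 \ {0} with p^0 = |p| (lightlike), the matrix A^1_p = [[√((|p| + p^3)/2), 0],[(p^1 + i p^2)/√(2(|p| + p^3)), √(2/(|p| + p^3))]] has determinant 1 and satisfies Λ(A^1_p) k_0 = (|p|, p), where k_0 = (1,0,0,1), provided |p| + p^3 > 0. -/

import Mathlib

/-! With `a = √((|p| + p³)/2)` and `z = p¹ + i p²` the matrix is `!![a, 0; z / (2a), a⁻¹]`, so its
determinant is `1`. Conjugating `k₀ = diag(2, 0)` by it gives `2 v vᴴ` for its first column
`v = (a, z / (2a))`, whose entries are `2a² = |p| + p³`, `z`, `z̄` and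
`|z|² / (2a²) = |p| - p³`, the last because `p` is lightlike: `|z|² = (|p| - p³)(|p| + p³)`. -/

open Matrix

noncomputable def pauliVec (n : Fin 3 → ℝ) : Matrix (Fin 2) (Fin 2) ℂ :=
  n 0 • !![0, 1; 1, 0] + n 1 • !![0, -Complex.I; Complex.I, 0] + n 2 • !![1, 0; 0, -1]

theorem smul_one_add_pauliVec (t : ℝ) (p : Fin 3 → ℝ) :
    t • (1 : Matrix (Fin 2) (Fin 2) ℂ) + pauliVec p =
      !![(t + p 2 : ℂ), p 0 - Complex.I * p 1; p 0 + Complex.I * p 1, t - p 2] := by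
  ext i j
  fin_cases i <;> fin_cases j <;> simp [pauliVec, sub_eq_add_neg, mul_comm]

theorem Matrix.fin_two_mul_diag_mul_conjTranspose {R : Type*} [CommRing R] [StarRing R]
    (a b c d k : R) :
    !![a, b; c, d] * !![k, 0; 0, 0] * !![a, b; c, d]ᴴ =
      !![a * k * star a, a * k * star c; c * k * star a, c * k * star c] := by
  ext i j
  fin_cases i <;> fin_cases j <;> simp [Matrix.mul_apply, Fin.sum_univ_two]

theorem Real.sqrt_two_div (s : ℝ) : √(2 / s) = (√(s / 2))⁻¹ := by
  rw [← Real.sqrt_inv, inv_div]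

theorem Real.sqrt_two_mul (s : ℝ) : √(2 * s) = 2 * √(s / 2) := by
  rw [show 2 * s = 2 ^ 2 * (s / 2) by ring, Real.sqrt_mul (by positivity),
    Real.sqrt_sq zero_le_two]

theorem sq_add_sq_eq_sqrt_sub_mul_sqrt_add (x y z : ℝ) :
    x ^ 2 + y ^ 2 = (√(x ^ 2 + y ^ 2 + z ^ 2) - z) * (√(x ^ 2 + y ^ 2 + z ^ 2) + z) := by
  linear_combination -Real.sq_sqrt (by positivity : 0 ≤ x ^ 2 + y ^ 2 + z ^ 2)

theorem wightman_lightlike_boost_general (p : Fin 3 → ℝ) :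
    let np : ℝ := Real.sqrt ((p 0) ^ 2 + (p 1) ^ 2 + (p 2) ^ 2)
    ∀ _hpos : 0 < np + p 2,
    let A1 : Matrix (Fin 2) (Fin 2) ℂ :=
      !![(Real.sqrt ((np + p 2) / 2) : ℂ), 0;
         ((p 0 : ℂ) + Complex.I * (p 1 : ℂ)) / (Real.sqrt (2 * (np + p 2)) : ℂ),
         (Real.sqrt (2 / (np + p 2)) : ℂ)]
    A1.det = 1 ∧
    A1 * !![(2 : ℂ), 0; 0, 0] * A1ᴴ =
      np • (1 : Matrix (Fin 2) (Fin 2) ℂ) + pauliVec p := by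
  intro np hpos A1
  set a := √((np + p 2) / 2) with ha
  have ha_ne : (a : ℂ) ≠ 0 := by
    exact_mod_cast (Real.sqrt_pos.2 (by linarith : 0 < (np + p 2) / 2)).ne'
  have ha_sq : 2 * (a : ℂ) ^ 2 = np + p 2 := by
    exact_mod_cast (show 2 * a ^ 2 = np + p 2 by rw [ha, Real.sq_sqrt (by linarith)]; ring)
  have hlight : (p 0 : ℂ) ^ 2 + (p 1 : ℂ) ^ 2 = (np - p 2) * (np + p 2) := by
    exact_mod_cast sq_add_sq_eq_sqrt_sub_mul_sqrt_add (p 0) (p 1) (p 2)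
  have hA1 : A1 = !![(a : ℂ), 0; (p 0 + Complex.I * p 1) / (2 * a), (a : ℂ)⁻¹] := by
    simp only [A1, Real.sqrt_two_div, Real.sqrt_two_mul, ← ha]
    push_cast
    rfl
  rw [hA1, Matrix.det_fin_two_of, Matrix.fin_two_mul_diag_mul_conjTranspose,
    smul_one_add_pauliVec]
  simp only [EmbeddingLike.apply_eq_iff_eq, vecCons_inj, and_true, RCLike.star_def,
    Complex.conj_ofReal, map_div₀, map_add, map_mul, map_ofNat, Complex.conj_I]
  refine ⟨by field_simp; ring, ⟨?_, ?_⟩, ?_, ?_⟩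
  · linear_combination ha_sq
  · field_simp
    ring
  · field_simp
  · field_simp
    linear_combination hlight - (p 1 : ℂ) ^ 2 * Complex.I_sq - (np - p 2 : ℂ) * ha_sq

theorem wightman_lightlike_boost (p : Fin 3 → ℝ) (hp : p ≠ 0) :
    let np : ℝ := Real.sqrt ((p 0) ^ 2 + (p 1) ^ 2 + (p 2) ^ 2)
    ∀ _hpos : 0 < np + p 2,
    let A1 : Matrix (Fin 2) (Fin 2) ℂ :=
      !![(Real.sqrt ((np + p 2) / 2) : ℂ), 0;
         ((p 0 : ℂ) + Complex.I * (p 1 : ℂ)) / (Real.sqrt (2 * (np + p 2)) : ℂ),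
         (Real.sqrt (2 / (np + p 2)) : ℂ)]
    A1.det = 1 ∧
    A1 * !![(2 : ℂ), 0; 0, 0] * A1ᴴ =
      np • (1 : Matrix (Fin 2) (Fin 2) ℂ) + pauliVec p :=
  wightman_lightlike_boost_general p
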